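/- Two permutations act equally on a nominal term if and only if they agree on its free atoms: π·r = π'·r iff π(a) = π'(a) for every a ∈ fa(r), where terms are quotiented by α-equivalence. -/

import Mathlib

abbrev Atom := ℕ

def FinPermGroup : Subgroup (Equiv.Perm Atom) where
  carrier := {π | {a | π a ≠ a}.Finite}
  one_mem' := by simp
  mul_mem' := by
    intro π π' hπ hπ'
    refine Set.Finite.subset (Set.Finite.union hπ hπ') fun a ha => ?_
    by_contra h
    simp only [Set.mem_union, Set.mem_setOf_eq, not_or, not_not] at h
    exact ha (show π (π' a) = a by rw [h.2, h.1])
  inv_mem' := by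
    intro π hπ
    have h : {a | π⁻¹ a ≠ a} = {a | π a ≠ a} := by
      ext a
      simp only [Set.mem_setOf_eq, ne_eq, not_iff_not]
      rw [Equiv.Perm.inv_eq_iff_eq, eq_comm]
    show {a | π⁻¹ a ≠ a}.Finite
    rw [h]; exact hπ

abbrev FinPerm : Type := FinPermGroup

def PSupports {X : Type*} [MulAction FinPerm X] (A : Set Atom) (x : X) : Prop :=
  ∀ π π' : FinPerm, (∀ a ∈ A, π.1 a = π'.1 a) → π • x = π' • x

def PIsLeastSupport {X : Type*} [MulAction FinPerm X] (S : Set Atom) (x : X) : Prop :=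
  PSupports S x ∧ ∀ A, PSupports A x → S ⊆ A

def IsPermissionSet (S : Set Atom) : Prop :=
  ∃ A B : Finset Atom, (↑A : Set Atom) ⊆ {n | n % 2 = 1} ∧ (↑B : Set Atom) ⊆ {n | n % 2 = 0} ∧
    S = ({n : Atom | n % 2 = 0} ∪ ↑A) \ ↑B

def swapPerm (a b : Atom) : FinPerm :=
  ⟨Equiv.swap a b, by
    show {c | Equiv.swap a b c ≠ c}.Finite
    apply Set.Finite.subset ((Set.finite_singleton b).insert a)
    intro c hc
    by_contra hn
    simp only [Set.mem_insert_iff, Set.mem_singleton_iff, not_or] at hn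
    exact hc (Equiv.swap_apply_of_ne_of_ne hn.1 hn.2)⟩

instance : SMul FinPerm Atom := ⟨fun π a => π.1 a⟩
instance : MulAction FinPerm Atom where
  one_smul _ := rfl
  mul_smul _ _ _ := rfl

/-- Permissive-nominal terms over a single name sort, with unknowns `V` (each with a
permission set given separately) and term-formers `F`: atoms, pairs (tuples),
term-former applications, atoms-abstractions, and moderated unknowns `π·X`. -/
inductive Tm (V F : Type) : Type
  | atom : Atom → Tm V F
  | pair : Tm V F → Tm V F → Tm V F
  | app : F → Tm V F → Tm V F
  | abs : Atom → Tm V F → Tm V F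
  | var : FinPerm → V → Tm V F

/-- The permutation action on terms. -/
def pact {V F : Type} (π : FinPerm) : Tm V F → Tm V F
  | .atom a => .atom (π.1 a)
  | .pair s t => .pair (pact π s) (pact π t)
  | .app f t => .app f (pact π t)
  | .abs a t => .abs (π.1 a) (pact π t)
  | .var π' X => .var (π * π') X

/-- Free atoms of a term. -/
def fa {V F : Type} (pmss : V → Set Atom) : Tm V F → Set Atom
  | .atom a => {a}
  | .pair s t => fa pmss s ∪ fa pmss t
  | .app _ t => fa pmss t
  | .abs a t => fa pmss t \ {a}
  | .var π X => π.1 '' pmss X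

/-- α-equivalence: the least congruence which is an equivalence relation and identifies
`(b a)·t` with `t` whenever `a, b ∉ fa t`. -/
inductive Aeq {V F : Type} (pmss : V → Set Atom) : Tm V F → Tm V F → Prop
  | refl (t) : Aeq pmss t t
  | symm {s t} : Aeq pmss s t → Aeq pmss t s
  | trans {s t u} : Aeq pmss s t → Aeq pmss t u → Aeq pmss s u
  | pair {s s' t t'} : Aeq pmss s s' → Aeq pmss t t' →
      Aeq pmss (.pair s t) (.pair s' t')
  | app (f) {t t'} : Aeq pmss t t' → Aeq pmss (.app f t) (.app f t')
  | abs (a) {t t'} : Aeq pmss t t' → Aeq pmss (.abs a t) (.abs a t')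
  | swap {a b t} : a ∉ fa pmss t → b ∉ fa pmss t →
      Aeq pmss (pact (swapPerm b a) t) t

/-!
The action of a finite permutation `σ` fixing `fa r` pointwise is undone by α-equivalence,
by induction on the size of its support: if `σ a ≠ a`, both `a` and `σ a` are fresh for `r`, and
`(σ a a) * σ` fixes `fa r` and has a smaller support. Applying this to `π'⁻¹ * π` and using
equivariance of `≈` gives one direction. Conversely, the locally nameless (de Bruijn) translation,
which keeps free atoms and replaces bound ones by indices, is invariant under `≈`; reading off the
translation of `π·r` at a free atom `a` recovers `π a`.
-/

lemma ncard_swap_mul_lt {α : Type*} [DecidableEq α] {f : Equiv.Perm α}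
    (hf : {x | f x ≠ x}.Finite) {a : α} (ha : f a ≠ a) :
    {x | (Equiv.swap (f a) a * f) x ≠ x}.ncard < {x | f x ≠ x}.ncard := by
  have hsub : {x | (Equiv.swap (f a) a * f) x ≠ x} ⊆ {x | f x ≠ x} := by
    intro x hx hfx
    have hxa : x ≠ a := by rintro rfl; exact ha hfx
    have hxfa : x ≠ f a := fun h => hxa (f.injective (hfx.trans h))
    exact hx (by simp [hfx, Equiv.swap_apply_of_ne_of_ne hxfa hxa])
  refine Set.ncard_lt_ncard ((Set.ssubset_iff_of_subset hsub).2 ⟨a, ha, ?_⟩) hf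
  simp

lemma FinPerm.ext {π ρ : FinPerm} (h : ∀ a, π.1 a = ρ.1 a) : π = ρ :=
  Subtype.ext (Equiv.ext h)

@[simp] lemma swapPerm_val (a b : Atom) : (swapPerm a b).1 = Equiv.swap a b := rfl

lemma swapPerm_mul_self (a b : Atom) : swapPerm a b * swapPerm a b = 1 :=
  FinPerm.ext fun _ => Equiv.swap_apply_self _ _ _

lemma mul_swapPerm (π : FinPerm) (a b : Atom) :
    π * swapPerm a b = swapPerm (π.1 a) (π.1 b) * π :=
  FinPerm.ext fun c => by simp [Equiv.swap_apply_apply]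

section Nominal

variable {V F : Type} {pmss : V → Set Atom}

@[simp] lemma pact_one (t : Tm V F) : pact 1 t = t := by
  induction t <;> simp_all [pact]

lemma pact_mul (π ρ : FinPerm) (t : Tm V F) : pact (π * ρ) t = pact π (pact ρ t) := by
  induction t <;> simp_all [pact, mul_assoc]

lemma fa_pact (π : FinPerm) (t : Tm V F) : fa pmss (pact π t) = π.1 '' fa pmss t := by
  induction t with
  | atom a => simp [pact, fa]
  | pair s t ihs iht => simp [pact, fa, ihs, iht, Set.image_union]
  | app f t ih => simp [pact, fa, ih]
  | abs a t ih => simp [pact, fa, ih, Set.image_sdiff π.1.injective]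
  | var ρ X => simp [pact, fa, Set.image_image]

lemma notMem_fa_pact {π : FinPerm} {t : Tm V F} {a : Atom} (h : a ∉ fa pmss t) :
    π.1 a ∉ fa pmss (pact π t) := by
  simpa [fa_pact] using h

lemma Aeq.pact {s t : Tm V F} (h : Aeq pmss s t) (π : FinPerm) :
    Aeq pmss (pact π s) (pact π t) := by
  induction h with
  | refl t => exact .refl _
  | symm _ ih => exact .symm ih
  | trans _ _ ih₁ ih₂ => exact .trans ih₁ ih₂
  | pair _ _ ih₁ ih₂ => exact .pair ih₁ ih₂
  | app f _ ih => exact .app f ih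
  | abs a _ ih => exact .abs _ ih
  | swap ha hb =>
      rw [← pact_mul, mul_swapPerm, pact_mul]
      exact .swap (notMem_fa_pact ha) (notMem_fa_pact hb)

lemma aeq_pact_self_of_eqOn_fa {t : Tm V F} (σ : FinPerm) (hσ : Set.EqOn σ.1 id (fa pmss t)) :
    Aeq pmss (pact σ t) t := by
  induction hn : {a | σ.1 a ≠ a}.ncard using Nat.strong_induction_on generalizing σ with
  | _ n ih =>
  by_cases hid : ∀ a, σ.1 a = a
  · rw [FinPerm.ext (ρ := 1) hid, pact_one]
    exact .refl t
  push Not at hid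
  obtain ⟨a, ha⟩ := hid
  have ha_fresh : a ∉ fa pmss t := fun h => ha (hσ h)
  have hσa_fresh : σ.1 a ∉ fa pmss t := fun h => ha (σ.1.injective (hσ h))
  set τ := swapPerm (σ.1 a) a
  have hτσ : Set.EqOn (τ * σ).1 id (fa pmss t) := fun b hb => by
    have hb' : σ.1 b = b := hσ hb
    simp [τ, hb', Equiv.swap_apply_of_ne_of_ne (ne_of_mem_of_not_mem hb hσa_fresh)
      (ne_of_mem_of_not_mem hb ha_fresh)]
  have hfa : fa pmss (pact (τ * σ) t) = fa pmss t := by rw [fa_pact, hτσ.image_eq_self]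
  have hσt : pact σ t = pact τ (pact (τ * σ) t) := by
    rw [← pact_mul, ← mul_assoc, swapPerm_mul_self, one_mul]
  rw [hσt]
  refine (Aeq.swap (hfa ▸ ha_fresh) (hfa ▸ hσa_fresh)).trans (ih _ ?_ (τ * σ) hτσ rfl)
  exact hn ▸ ncard_swap_mul_lt σ.2 ha

lemma aeq_pact_of_eqOn_fa {π π' : FinPerm} {t : Tm V F} (h : Set.EqOn π.1 π'.1 (fa pmss t)) :
    Aeq pmss (pact π t) (pact π' t) := by
  have hfix : Set.EqOn (π'⁻¹ * π).1 id (fa pmss t) := fun a ha => by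
    show π'.1.symm (π.1 a) = a
    rw [h ha, Equiv.symm_apply_apply]
  have := (aeq_pact_self_of_eqOn_fa _ hfix).pact π'
  rwa [← pact_mul, mul_inv_cancel_left] at this

end Nominal

/-- Locally nameless terms: free atoms stay names (`Sum.inl`), bound atoms become de Bruijn
indices (`Sum.inr`). -/
inductive DbTm (V F : Type) (pmss : V → Set Atom) : Type
  | name : Atom ⊕ ℕ → DbTm V F pmss
  | pair : DbTm V F pmss → DbTm V F pmss → DbTm V F pmss
  | app : F → DbTm V F pmss → DbTm V F pmss
  | abs : DbTm V F pmss → DbTm V F pmss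
  | var : (X : V) → (pmss X → Atom ⊕ ℕ) → DbTm V F pmss

def dbName (a : Atom) : List Atom → Atom ⊕ ℕ
  | [] => .inl a
  | b :: l => if a = b then .inr 0 else (dbName a l).map id Nat.succ

@[simp] lemma dbName_cons_self (a : Atom) (l : List Atom) : dbName a (a :: l) = .inr 0 := by
  simp [dbName]

@[simp] lemma dbName_cons_of_ne {a b : Atom} (l : List Atom) (h : a ≠ b) :
    dbName a (b :: l) = (dbName a l).map id Nat.succ := by
  simp [dbName, h]

def toDb {V F : Type} (pmss : V → Set Atom) : Tm V F → List Atom → DbTm V F pmss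
  | .atom a, ctx => .name (dbName a ctx)
  | .pair s t, ctx => .pair (toDb pmss s ctx) (toDb pmss t ctx)
  | .app f t, ctx => .app f (toDb pmss t ctx)
  | .abs a t, ctx => .abs (toDb pmss t (a :: ctx))
  | .var ρ X, ctx => .var X fun p => dbName (ρ.1 p.1) ctx

section LocallyNameless

variable {V F : Type} {pmss : V → Set Atom}

lemma toDb_pact (t : Tm V F) (π : FinPerm) (ctx ctx' : List Atom)
    (h : ∀ a ∈ fa pmss t, dbName (π.1 a) ctx' = dbName a ctx) :
    toDb pmss (pact π t) ctx' = toDb pmss t ctx := by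
  induction t generalizing ctx ctx' with
  | atom a => simp [pact, toDb, h a rfl]
  | pair s t ihs iht =>
      simp only [pact, toDb, ihs ctx ctx' fun a ha => h a (.inl ha),
        iht ctx ctx' fun a ha => h a (.inr ha)]
  | app f t ih => simp only [pact, toDb, ih ctx ctx' h]
  | abs a t ih =>
      simp only [pact, toDb]
      refine congrArg _ (ih (a :: ctx) (π.1 a :: ctx') fun b hb => ?_)
      rcases eq_or_ne b a with rfl | hba
      · simp
      · simp [hba, π.1.injective.ne hba, h b ⟨hb, hba⟩]
  | var ρ X => exact congrArg _ (funext fun p : pmss X => h _ ⟨p.1, p.2, rfl⟩)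

lemma Aeq.toDb_eq {s t : Tm V F} (h : Aeq pmss s t) (ctx : List Atom) :
    toDb pmss s ctx = toDb pmss t ctx := by
  induction h generalizing ctx with
  | refl t => rfl
  | symm _ ih => exact (ih ctx).symm
  | trans _ _ ih₁ ih₂ => exact (ih₁ ctx).trans (ih₂ ctx)
  | pair _ _ ih₁ ih₂ => simp only [toDb, ih₁ ctx, ih₂ ctx]
  | app f _ ih => simp only [toDb, ih ctx]
  | abs a _ ih => simp only [toDb, ih (a :: ctx)]
  | swap ha hb =>
      refine toDb_pact _ _ ctx ctx fun c hc => ?_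
      rw [swapPerm_val, Equiv.swap_apply_of_ne_of_ne (ne_of_mem_of_not_mem hc hb)
        (ne_of_mem_of_not_mem hc ha)]

lemma dbName_eq_of_toDb_pact_eq {π π' : FinPerm} (r : Tm V F) (ctx ctx' : List Atom)
    (h : toDb pmss (pact π r) ctx = toDb pmss (pact π' r) ctx') :
    ∀ a ∈ fa pmss r, dbName (π.1 a) ctx = dbName (π'.1 a) ctx' := by
  induction r generalizing ctx ctx' with
  | atom a =>
      rintro b rfl
      injection h
  | pair s t ihs iht =>
      injection h with hs ht
      rintro b (hb | hb)
      exacts [ihs ctx ctx' hs b hb, iht ctx ctx' ht b hb]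
  | app f t ih =>
      injection h with _ ht
      exact ih ctx ctx' ht
  | abs a t ih =>
      injection h with ht
      rintro b ⟨hb, hba⟩
      have := ih _ _ ht b hb
      rw [dbName_cons_of_ne _ (π.1.injective.ne hba), dbName_cons_of_ne _ (π'.1.injective.ne hba)]
        at this
      exact Sum.map_injective.2 ⟨Function.injective_id, Nat.succ_injective⟩ this
  | var ρ X =>
      injection h with _ hX
      rintro _ ⟨c, hc, rfl⟩
      exact congrFun hX ⟨c, hc⟩

lemma eqOn_fa_of_aeq_pact {π π' : FinPerm} {r : Tm V F} (h : Aeq pmss (pact π r) (pact π' r)) :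
    Set.EqOn π.1 π'.1 (fa pmss r) := fun a ha => by
  simpa [dbName] using dbName_eq_of_toDb_pact_eq r [] [] (h.toDb_eq []) a ha

end LocallyNameless

theorem stmt19_general {V F : Type} (pmss : V → Set Atom)
    (π π' : FinPerm) (r : Tm V F) :
    Aeq pmss (pact π r) (pact π' r) ↔ ∀ a ∈ fa pmss r, π.1 a = π'.1 a :=
  ⟨eqOn_fa_of_aeq_pact, aeq_pact_of_eqOn_fa⟩

theorem stmt19 {V F : Type} (pmss : V → Set Atom)
    (hpm : ∀ X : V, IsPermissionSet (pmss X))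
    (π π' : FinPerm) (r : Tm V F) :
    Aeq pmss (pact π r) (pact π' r) ↔ ∀ a ∈ fa pmss r, π.1 a = π'.1 a :=
  stmt19_general pmss π π' r
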